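/- (Lemma A2(i).) Under the stated assumptions, there exists a constant C > 0 such that for all n ≥ 1 and all s ∈ ℝ^q, E[sup_{θ', θ'' ∈ Θ} |entry_{ij}(Ġ_n(s, θ')^⋆ Ġ_n(s, θ''))|] ≤ C min(1, ‖s‖²) for every 1 ≤ i, j ≤ d; in particular, for any Θ-valued random elements θ̂'_n and θ̂''_n, both the real and imaginary parts of each entry of Ġ_n(s, θ̂'_n)^⋆ Ġ_n(s, θ̂''_n) have absolute expectation at most C min(1, ‖s‖²). Here Ġ_n(s, θ) = n^{−1} ∑_{t=1}^n (∂h(Z_t, θ)/∂θ − n^{−1} ∑_{r=1}^n ∂h(Z_r, θ)/∂θ) exp(i⟨s, X_t⟩), an l × d complex matrix, and A^⋆ denotes the conjugate transpose. -/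

import Mathlib

open MeasureTheory Matrix

/-- The `l × d` matrix of partial derivatives `∂h(z, θ)/∂θ`, extracted from the Fréchet
derivative `Dh z θ`. -/
noncomputable def DhMat {k d l : ℕ}
    (Dh : EuclideanSpace ℝ (Fin k) → EuclideanSpace ℝ (Fin d) →
      (EuclideanSpace ℝ (Fin d) →L[ℝ] EuclideanSpace ℝ (Fin l)))
    (z : EuclideanSpace ℝ (Fin k)) (θ : EuclideanSpace ℝ (Fin d)) :
    Matrix (Fin l) (Fin d) ℝ :=
  Matrix.of fun i j => Dh z θ (EuclideanSpace.single j 1) i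

/-- `Ġ_n(s, θ) = n^{-1} ∑_{t=0}^{n-1} (∂h(Z_t,θ)/∂θ − n^{-1} ∑_r ∂h(Z_r,θ)/∂θ) e^{i⟨s, X_t⟩}`,
an `l × d` complex matrix; the process `(Z_t, X_t)` is generated by the shift `T`. -/
noncomputable def sampleGdot {Ωs : Type*} {k d l q : ℕ}
    (T : Ωs → Ωs) (Z0 : Ωs → EuclideanSpace ℝ (Fin k)) (X0 : Ωs → EuclideanSpace ℝ (Fin q))
    (Dh : EuclideanSpace ℝ (Fin k) → EuclideanSpace ℝ (Fin d) →
      (EuclideanSpace ℝ (Fin d) →L[ℝ] EuclideanSpace ℝ (Fin l)))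
    (n : ℕ) (s : EuclideanSpace ℝ (Fin q)) (θ : EuclideanSpace ℝ (Fin d)) (ω : Ωs) :
    Matrix (Fin l) (Fin d) ℂ :=
  Matrix.of fun i j => (n : ℂ)⁻¹ * ∑ t ∈ Finset.range n,
    Complex.exp (Complex.I * Complex.ofReal (inner ℝ s (X0 (T^[t] ω)))) *
      Complex.ofReal (DhMat Dh (Z0 (T^[t] ω)) θ i j -
        (n : ℝ)⁻¹ * ∑ r ∈ Finset.range n, DhMat Dh (Z0 (T^[r] ω)) θ i j)


lemma abs_coord_le {m : ℕ} (w : EuclideanSpace ℝ (Fin m)) (i : Fin m) : |w i| ≤ ‖w‖ := by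
  rw [EuclideanSpace.norm_eq]
  rw [← Real.sqrt_sq_eq_abs]
  apply Real.sqrt_le_sqrt
  have := Finset.single_le_sum (f := fun j => ‖w j‖ ^ 2) (fun j _ => by positivity)
    (Finset.mem_univ i)
  simpa [sq_abs] using this

lemma abs_exp_I_sub_one (r : ℝ) :
    ‖Complex.exp (Complex.I * r) - 1‖ ≤ 2 * min 1 |r| := by
  rcases le_total |r| 1 with hr | hr
  · rw [min_eq_right hr]
    have := Complex.norm_exp_sub_one_le (x := Complex.I * r) (by simpa using hr)
    simpa using this
  · rw [min_eq_left hr]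
    calc ‖Complex.exp (Complex.I * r) - 1‖
        ≤ ‖Complex.exp (Complex.I * r)‖ + 1 := by
          simpa using norm_sub_le (Complex.exp (Complex.I * r)) 1
      _ ≤ 2 * 1 := by rw [mul_comm Complex.I, Complex.norm_exp_ofReal_mul_I]; norm_num

lemma min_one_mul_le {u v : ℝ} (hu : 0 ≤ u) (hv : 0 ≤ v) : min 1 (u * v) ≤ min 1 u * (1 + v) := by
  rcases le_total u 1 with h | h
  · rw [min_eq_right h]
    calc min 1 (u*v) ≤ u * v := min_le_right _ _
      _ ≤ u * (1 + v) := by nlinarith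
  · rw [min_eq_left h]
    calc min 1 (u*v) ≤ 1 := min_le_left _ _
      _ ≤ 1 * (1+v) := by nlinarith

lemma avg_sq_le {n : ℕ} (hn : 1 ≤ n) (u : ℕ → ℝ) :
    ((n:ℝ)⁻¹ * ∑ t ∈ Finset.range n, u t) ^ 2 ≤ (n:ℝ)⁻¹ * ∑ t ∈ Finset.range n, (u t) ^ 2 := by
  have hn0 : (0:ℝ) < n := by positivity
  have := Finset.sum_mul_sq_le_sq_mul_sq (Finset.range n) u (fun _ => 1)
  simp only [mul_one, one_pow, Finset.sum_const, Finset.card_range, nsmul_eq_mul] at this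
  rw [mul_pow]
  have h1 : (n:ℝ)⁻¹ * (n:ℝ) = 1 := inv_mul_cancel₀ hn0.ne'
  have h2 := mul_le_mul_of_nonneg_left this (by positivity : (0:ℝ) ≤ ((n:ℝ)⁻¹)^2)
  have h3 : ((n:ℝ)⁻¹)^2 * ((∑ i ∈ Finset.range n, u i ^ 2) * (n:ℝ))
      = (n:ℝ)⁻¹ * ∑ i ∈ Finset.range n, u i ^ 2 := by
    have e : ((n:ℝ)⁻¹)^2 * ((∑ i ∈ Finset.range n, u i ^ 2) * (n:ℝ))
        = ((n:ℝ)⁻¹*(n:ℝ)) * ((n:ℝ)⁻¹ * ∑ i ∈ Finset.range n, u i ^ 2) := by ring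
    rw [e, h1, one_mul]
  linarith

lemma entry_bound {Ωs : Type*} {k d l q : ℕ}
    (T : Ωs → Ωs) (Z0 : Ωs → EuclideanSpace ℝ (Fin k)) (X0 : Ωs → EuclideanSpace ℝ (Fin q))
    (Dh : EuclideanSpace ℝ (Fin k) → EuclideanSpace ℝ (Fin d) →
      (EuclideanSpace ℝ (Fin d) →L[ℝ] EuclideanSpace ℝ (Fin l)))
    (Θ : Set (EuclideanSpace ℝ (Fin d))) (g : EuclideanSpace ℝ (Fin k) → ℝ)
    (hg : ∀ z, ∀ θ ∈ Θ, ‖Dh z θ‖ ≤ g z)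
    {n : ℕ} (hn : 1 ≤ n) (s : EuclideanSpace ℝ (Fin q))
    {θ : EuclideanSpace ℝ (Fin d)} (hθ : θ ∈ Θ) (ω : Ωs) (a : Fin l) (i : Fin d) :
    ‖sampleGdot T Z0 X0 Dh n s θ ω a i‖ ≤
      (n:ℝ)⁻¹ * ∑ t ∈ Finset.range n,
        (g (Z0 (T^[t] ω)) + (n:ℝ)⁻¹ * ∑ r ∈ Finset.range n, g (Z0 (T^[r] ω)))
          * (2 * min 1 (‖s‖ * ‖X0 (T^[t] ω)‖)) := by
  have hn0 : (0:ℝ) < n := by positivity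
  set D : ℕ → ℝ := fun t => DhMat Dh (Z0 (T^[t] ω)) θ a i with hD
  set c : ℕ → ℝ := fun t => D t - (n:ℝ)⁻¹ * ∑ r ∈ Finset.range n, D r with hc
  set e : ℕ → ℂ := fun t => Complex.exp (Complex.I * Complex.ofReal (inner ℝ s (X0 (T^[t] ω)))) with he
  have hDb : ∀ t, |D t| ≤ g (Z0 (T^[t] ω)) := by
    intro t
    have h1 : |D t| ≤ ‖Dh (Z0 (T^[t] ω)) θ (EuclideanSpace.single i 1)‖ :=
      abs_coord_le _ a
    have h2 : ‖Dh (Z0 (T^[t] ω)) θ (EuclideanSpace.single i 1)‖ ≤ ‖Dh (Z0 (T^[t] ω)) θ‖ := by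
      have := (Dh (Z0 (T^[t] ω)) θ).le_opNorm (EuclideanSpace.single i (1:ℝ))
      simpa [EuclideanSpace.norm_single] using this
    exact h1.trans (h2.trans (hg _ _ hθ))
  have hcb : ∀ t, |c t| ≤ g (Z0 (T^[t] ω)) + (n:ℝ)⁻¹ * ∑ r ∈ Finset.range n, g (Z0 (T^[r] ω)) := by
    intro t
    calc |c t| ≤ |D t| + |(n:ℝ)⁻¹ * ∑ r ∈ Finset.range n, D r| := abs_sub _ _
      _ ≤ g (Z0 (T^[t] ω)) + (n:ℝ)⁻¹ * ∑ r ∈ Finset.range n, g (Z0 (T^[r] ω)) := by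
        refine add_le_add (hDb t) ?_
        rw [abs_mul, abs_inv, Nat.abs_cast]
        exact mul_le_mul_of_nonneg_left
          ((Finset.abs_sum_le_sum_abs _ _).trans (Finset.sum_le_sum fun r _ => hDb r))
          (inv_nonneg.2 hn0.le)
  have hcsum : ∑ t ∈ Finset.range n, c t = 0 := by
    simp only [hc, Finset.sum_sub_distrib, Finset.sum_const, Finset.card_range, nsmul_eq_mul]
    rw [← mul_assoc, mul_inv_cancel₀ hn0.ne', one_mul, sub_self]
  have hsum0 : ∑ t ∈ Finset.range n, ((c t : ℝ) : ℂ) = 0 := by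
    rw [← Complex.ofReal_sum, hcsum, Complex.ofReal_zero]
  have hrw : sampleGdot T Z0 X0 Dh n s θ ω a i
      = (n:ℂ)⁻¹ * ∑ t ∈ Finset.range n, (e t - 1) * (c t : ℂ) := by
    show (n : ℂ)⁻¹ * ∑ t ∈ Finset.range n, e t * (c t : ℂ) = _
    congr 1
    simp only [sub_one_mul, Finset.sum_sub_distrib, hsum0, sub_zero]
  rw [hrw]
  rw [norm_mul, norm_inv, Complex.norm_natCast]
  calc (n:ℝ)⁻¹ * ‖∑ t ∈ Finset.range n, (e t - 1) * (c t : ℂ)‖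
      ≤ (n:ℝ)⁻¹ * ∑ t ∈ Finset.range n, ‖(e t - 1) * (c t : ℂ)‖ :=
        mul_le_mul_of_nonneg_left (norm_sum_le _ _) (inv_nonneg.2 hn0.le)
    _ ≤ (n:ℝ)⁻¹ * ∑ t ∈ Finset.range n,
        (g (Z0 (T^[t] ω)) + (n:ℝ)⁻¹ * ∑ r ∈ Finset.range n, g (Z0 (T^[r] ω)))
          * (2 * min 1 (‖s‖ * ‖X0 (T^[t] ω)‖)) := by
        refine mul_le_mul_of_nonneg_left (Finset.sum_le_sum fun t ht => ?_)
          (inv_nonneg.2 hn0.le)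
        rw [norm_mul, Complex.norm_real, Real.norm_eq_abs]
        have h1 : ‖e t - 1‖ ≤ 2 * min 1 (‖s‖ * ‖X0 (T^[t] ω)‖) :=
          (abs_exp_I_sub_one _).trans (mul_le_mul_of_nonneg_left
            (min_le_min (le_refl 1) (abs_real_inner_le_norm _ _)) (by norm_num))
        calc ‖e t - 1‖ * |c t|
            ≤ (2 * min 1 (‖s‖ * ‖X0 (T^[t] ω)‖)) *
              (g (Z0 (T^[t] ω)) + (n:ℝ)⁻¹ * ∑ r ∈ Finset.range n, g (Z0 (T^[r] ω))) :=
              mul_le_mul h1 (hcb t) (abs_nonneg _) (by positivity)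
          _ = _ := mul_comm _ _

set_option maxHeartbeats 1000000 in
lemma prod_entry_bound {Ωs : Type*} {k d l q : ℕ}
    (T : Ωs → Ωs) (Z0 : Ωs → EuclideanSpace ℝ (Fin k)) (X0 : Ωs → EuclideanSpace ℝ (Fin q))
    (Dh : EuclideanSpace ℝ (Fin k) → EuclideanSpace ℝ (Fin d) →
      (EuclideanSpace ℝ (Fin d) →L[ℝ] EuclideanSpace ℝ (Fin l)))
    (Θ : Set (EuclideanSpace ℝ (Fin d))) (g : EuclideanSpace ℝ (Fin k) → ℝ)
    (hg : ∀ z, ∀ θ ∈ Θ, ‖Dh z θ‖ ≤ g z) (hg0 : ∀ z, 0 ≤ g z)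
    {n : ℕ} (hn : 1 ≤ n) (s : EuclideanSpace ℝ (Fin q))
    {θ' θ'' : EuclideanSpace ℝ (Fin d)} (hθ' : θ' ∈ Θ) (hθ'' : θ'' ∈ Θ) (ω : Ωs)
    (i j : Fin d) :
    ‖((sampleGdot T Z0 X0 Dh n s θ' ω)ᴴ * sampleGdot T Z0 X0 Dh n s θ'' ω) i j‖
      ≤ min 1 (‖s‖^2) * ((32*((l:ℝ)+1)) *
        ((n:ℝ)⁻¹ * ∑ t ∈ Finset.range n, g (Z0 (T^[t] ω))^4
          + (n:ℝ)⁻¹ * ∑ t ∈ Finset.range n, ‖X0 (T^[t] ω)‖^4 + 1)) := by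
  have hn0 : (0:ℝ) < n := by positivity
  set ν : ℝ := (n:ℝ)⁻¹ with hν
  have hν0 : 0 ≤ ν := inv_nonneg.2 hn0.le
  set gg : ℕ → ℝ := fun t => g (Z0 (T^[t] ω)) with hgg
  set xx : ℕ → ℝ := fun t => ‖X0 (T^[t] ω)‖ with hxx
  set gbar : ℝ := ν * ∑ r ∈ Finset.range n, gg r with hgbar
  set M : ℝ := ν * ∑ t ∈ Finset.range n, (gg t + gbar) * (2 * min 1 (‖s‖ * xx t)) with hM
  set G : ℝ := ν * ∑ t ∈ Finset.range n, gg t ^ 4 with hG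
  set X : ℝ := ν * ∑ t ∈ Finset.range n, xx t ^ 4 with hX
  set m : ℝ := min 1 (‖s‖^2) with hm
  have hgg0 : ∀ t, 0 ≤ gg t := fun t => hg0 _
  have hxx0 : ∀ t, 0 ≤ xx t := fun t => norm_nonneg _
  have hgbar0 : 0 ≤ gbar := mul_nonneg hν0 (Finset.sum_nonneg fun t _ => hgg0 t)
  have hm0 : 0 ≤ m := le_min zero_le_one (by positivity)
  have hM0 : 0 ≤ M := mul_nonneg hν0 (Finset.sum_nonneg fun t _ => by
    have := hgg0 t
    have : (0:ℝ) ≤ min 1 (‖s‖ * xx t) := le_min zero_le_one (by positivity)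
    positivity)
  have hG0 : 0 ≤ G := mul_nonneg hν0 (Finset.sum_nonneg fun t _ => by positivity)
  have hX0 : 0 ≤ X := mul_nonneg hν0 (Finset.sum_nonneg fun t _ => by positivity)
  -- Step B
  have hB : ‖
      (((sampleGdot T Z0 X0 Dh n s θ' ω)ᴴ * sampleGdot T Z0 X0 Dh n s θ'' ω) i j)‖
      ≤ (l:ℝ) * M^2 := by
    rw [Matrix.mul_apply]
    calc ‖∑ a, (sampleGdot T Z0 X0 Dh n s θ' ω)ᴴ i a *
            sampleGdot T Z0 X0 Dh n s θ'' ω a j‖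
        ≤ ∑ a, ‖(sampleGdot T Z0 X0 Dh n s θ' ω)ᴴ i a *
            sampleGdot T Z0 X0 Dh n s θ'' ω a j‖ := norm_sum_le _ _
      _ ≤ ∑ _a : Fin l, M * M := by
          refine Finset.sum_le_sum fun a _ => ?_
          rw [norm_mul, Matrix.conjTranspose_apply]
          have e1 : ‖star (sampleGdot T Z0 X0 Dh n s θ' ω a i)‖
              = ‖sampleGdot T Z0 X0 Dh n s θ' ω a i‖ := norm_star _
          rw [e1]
          exact mul_le_mul (entry_bound T Z0 X0 Dh Θ g hg hn s hθ' ω a i)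
            (entry_bound T Z0 X0 Dh Θ g hg hn s hθ'' ω a j)
            (norm_nonneg _) hM0
      _ = (l:ℝ) * M^2 := by simp [Finset.sum_const, sq]
  refine hB.trans ?_
  -- Step C
  set P : ℝ := ν * ∑ t ∈ Finset.range n, (gg t + gbar)^2 with hP
  set Q : ℝ := 1 + ν * ∑ t ∈ Finset.range n, xx t ^ 2 with hQ
  have hP0 : 0 ≤ P := mul_nonneg hν0 (Finset.sum_nonneg fun t _ => sq_nonneg _)
  have hQ0 : 0 ≤ Q := by
    have : 0 ≤ ν * ∑ t ∈ Finset.range n, xx t ^ 2 :=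
      mul_nonneg hν0 (Finset.sum_nonneg fun t _ => sq_nonneg _)
    linarith
  -- M^2 ≤ P * (4 m Q)
  have hCS : M^2 ≤ P * (ν * ∑ t ∈ Finset.range n, (2 * min 1 (‖s‖ * xx t))^2) := by
    rw [hM, mul_pow]
    have := Finset.sum_mul_sq_le_sq_mul_sq (Finset.range n)
      (fun t => gg t + gbar) (fun t => 2 * min 1 (‖s‖ * xx t))
    calc ν^2 * (∑ t ∈ Finset.range n, (gg t + gbar) * (2 * min 1 (‖s‖ * xx t)))^2
        ≤ ν^2 * ((∑ t ∈ Finset.range n, (gg t + gbar)^2) *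
            ∑ t ∈ Finset.range n, (2 * min 1 (‖s‖ * xx t))^2) := by
          exact mul_le_mul_of_nonneg_left this (sq_nonneg ν)
      _ = _ := by rw [hP]; ring
  have hbsq : ∀ t, (2 * min 1 (‖s‖ * xx t))^2 ≤ 4 * (m * (1 + xx t ^2)) := by
    intro t
    have h1 : (min 1 (‖s‖ * xx t))^2 = min 1 ((‖s‖ * xx t)^2) := by
      rcases le_total (‖s‖ * xx t) 1 with hw | hw
      · rw [min_eq_right hw, min_eq_right (by nlinarith [mul_nonneg (norm_nonneg s) (hxx0 t)])]
      · rw [min_eq_left hw, min_eq_left (by nlinarith), one_pow]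
    have h2 : min 1 ((‖s‖ * xx t)^2) ≤ m * (1 + xx t ^ 2) := by
      rw [mul_pow]
      exact min_one_mul_le (by positivity) (by positivity)
    calc (2 * min 1 (‖s‖ * xx t))^2 = 4 * (min 1 (‖s‖ * xx t))^2 := by ring
      _ ≤ 4 * (m * (1 + xx t ^2)) := by rw [h1]; linarith
  have hsumb : ν * ∑ t ∈ Finset.range n, (2 * min 1 (‖s‖ * xx t))^2 ≤ 4 * m * Q := by
    calc ν * ∑ t ∈ Finset.range n, (2 * min 1 (‖s‖ * xx t))^2
        ≤ ν * ∑ t ∈ Finset.range n, 4 * (m * (1 + xx t ^2)) :=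
          mul_le_mul_of_nonneg_left (Finset.sum_le_sum fun t _ => hbsq t) hν0
      _ = 4 * m * (ν * ∑ t ∈ Finset.range n, (1 + xx t ^ 2)) := by
          simp only [Finset.mul_sum]
          exact Finset.sum_congr rfl fun t _ => by ring
      _ = 4 * m * Q := by
          rw [Finset.sum_add_distrib, Finset.sum_const, Finset.card_range, nsmul_eq_mul,
            mul_one, mul_add, hν, inv_mul_cancel₀ hn0.ne', hQ]
  have hMPQ : M^2 ≤ 4 * m * (P * Q) := by
    calc M^2 ≤ P * (ν * ∑ t ∈ Finset.range n, (2 * min 1 (‖s‖ * xx t))^2) := hCS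
      _ ≤ P * (4 * m * Q) := mul_le_mul_of_nonneg_left hsumb hP0
      _ = 4 * m * (P * Q) := by ring
  -- P² ≤ 16 G
  have hgbar4 : gbar^4 ≤ G := by
    have h1 : gbar^2 ≤ ν * ∑ t ∈ Finset.range n, gg t ^ 2 := avg_sq_le hn gg
    have h2 : (ν * ∑ t ∈ Finset.range n, gg t ^ 2)^2 ≤ ν * ∑ t ∈ Finset.range n, (gg t^2)^2 :=
      avg_sq_le hn (fun t => gg t ^ 2)
    have h3 : gbar^4 = (gbar^2)^2 := by ring
    have h4 : (gbar^2)^2 ≤ (ν * ∑ t ∈ Finset.range n, gg t ^ 2)^2 :=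
      pow_le_pow_left₀ (sq_nonneg _) h1 2
    rw [h3, hG]
    refine h4.trans (h2.trans ?_)
    apply le_of_eq
    congr 1
    exact Finset.sum_congr rfl fun t _ => by ring
  have hP2 : P^2 ≤ 16 * G := by
    have h1 : P^2 ≤ ν * ∑ t ∈ Finset.range n, ((gg t + gbar)^2)^2 :=
      avg_sq_le hn (fun t => (gg t + gbar)^2)
    have h2 : ∀ t, ((gg t + gbar)^2)^2 ≤ 8 * (gg t ^4 + gbar^4) := by
      intro t
      nlinarith [sq_nonneg (gg t - gbar), sq_nonneg (gg t + gbar), sq_nonneg (gg t^2 - gbar^2),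
        hgg0 t, hgbar0]
    have h3 : ν * ∑ t ∈ Finset.range n, ((gg t + gbar)^2)^2
        ≤ ν * ∑ t ∈ Finset.range n, 8 * (gg t ^4 + gbar^4) :=
      mul_le_mul_of_nonneg_left (Finset.sum_le_sum fun t _ => h2 t) hν0
    have h5 : ν * ∑ t ∈ Finset.range n, 8 * (gg t ^4 + gbar^4) ≤ 16 * G := by
      have hterm : ∀ t ∈ Finset.range n, 8 * (gg t ^4 + gbar^4) ≤ 8 * gg t ^ 4 + 8 * G :=
        fun t _ => by nlinarith [hgbar4]
      have hsum := Finset.sum_le_sum hterm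
      rw [Finset.sum_add_distrib, Finset.sum_const, Finset.card_range, nsmul_eq_mul] at hsum
      have h6 := mul_le_mul_of_nonneg_left hsum hν0
      rw [mul_add] at h6
      have e1 : ν * ∑ t ∈ Finset.range n, 8 * gg t ^ 4 = 8 * G := by
        rw [hG]
        simp only [Finset.mul_sum]
        exact Finset.sum_congr rfl fun t _ => by ring
      have e2 : ν * ((n:ℝ) * (8 * G)) = 8 * G := by
        rw [← mul_assoc, hν, inv_mul_cancel₀ hn0.ne', one_mul]
      linarith
    exact (h1.trans h3).trans h5
  -- Q² ≤ 2 + 2X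
  have hQ2 : Q^2 ≤ 2 + 2 * X := by
    have h1 : (ν * ∑ t ∈ Finset.range n, xx t ^ 2)^2 ≤ ν * ∑ t ∈ Finset.range n, (xx t^2)^2 :=
      avg_sq_le hn (fun t => xx t ^ 2)
    have h2 : ν * ∑ t ∈ Finset.range n, (xx t^2)^2 = X := by
      rw [hX]; congr 1; exact Finset.sum_congr rfl fun t _ => by ring
    have h3 : 0 ≤ ν * ∑ t ∈ Finset.range n, xx t ^ 2 :=
      mul_nonneg hν0 (Finset.sum_nonneg fun t _ => sq_nonneg _)
    rw [hQ]
    nlinarith [h1, h2, h3, sq_nonneg (ν * ∑ t ∈ Finset.range n, xx t ^ 2 - 1)]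
  -- combine
  have hfin : M^2 ≤ 32 * m * (G + X + 1) := by
    have hPQ : P * Q ≤ (16 * G + (2 + 2*X)) / 2 := by
      nlinarith [sq_nonneg (P - Q), hP2, hQ2]
    have h4m : (0:ℝ) ≤ 4 * m := by linarith
    have hmain := hMPQ.trans (mul_le_mul_of_nonneg_left hPQ h4m)
    nlinarith [mul_nonneg hm0 hG0, mul_nonneg hm0 hX0, hm0]
  calc (l:ℝ) * M^2 ≤ (l:ℝ) * (32 * m * (G + X + 1)) :=
      mul_le_mul_of_nonneg_left hfin (Nat.cast_nonneg l)
    _ ≤ m * (32*((l:ℝ)+1) * (G + X + 1)) := by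
      have hl : (0:ℝ) ≤ (l:ℝ) := Nat.cast_nonneg l
      have hy : (0:ℝ) ≤ m * (G + X + 1) := mul_nonneg hm0 (by linarith)
      nlinarith [hy, mul_nonneg hl hy]

lemma lint_avg {Ωs : Type*} [MeasurableSpace Ωs] (μ : Measure Ωs) [IsProbabilityMeasure μ]
    {T : Ωs → Ωs} (hT : MeasurePreserving T μ μ) {f : Ωs → ℝ}
    (hf : Integrable f μ) (hf0 : ∀ ω, 0 ≤ f ω) {n : ℕ} (hn : 1 ≤ n) :
    ∫⁻ ω, ENNReal.ofReal ((n:ℝ)⁻¹ * ∑ t ∈ Finset.range n, f (T^[t] ω)) ∂μ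
      = ENNReal.ofReal (∫ ω, f ω ∂μ) := by
  have hn0 : (0:ℝ) < n := by exact_mod_cast Nat.pos_of_ne_zero (by omega)
  have hfae : AEMeasurable (fun ω => ENNReal.ofReal (f ω)) μ :=
    ENNReal.measurable_ofReal.comp_aemeasurable hf.aestronglyMeasurable.aemeasurable
  have hae : ∀ t : ℕ, AEMeasurable (fun ω => ENNReal.ofReal (f (T^[t] ω))) μ :=
    fun t => hfae.comp_quasiMeasurePreserving (hT.iterate t).quasiMeasurePreserving
  have hpt : ∀ ω, ENNReal.ofReal ((n:ℝ)⁻¹ * ∑ t ∈ Finset.range n, f (T^[t] ω))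
      = ENNReal.ofReal ((n:ℝ)⁻¹) * ∑ t ∈ Finset.range n, ENNReal.ofReal (f (T^[t] ω)) := by
    intro ω
    rw [ENNReal.ofReal_mul (by positivity), ENNReal.ofReal_sum_of_nonneg (fun t _ => hf0 _)]
  simp_rw [hpt]
  rw [lintegral_const_mul' _ _ ENNReal.ofReal_ne_top,
    lintegral_finset_sum' _ (fun t _ => hae t)]
  have hone : ∀ t : ℕ, ∫⁻ ω, ENNReal.ofReal (f (T^[t] ω)) ∂μ
      = ENNReal.ofReal (∫ ω, f ω ∂μ) := by
    intro t
    have hmp := hT.iterate t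
    have : ∫⁻ ω, ENNReal.ofReal (f (T^[t] ω)) ∂μ
        = ∫⁻ ω, ENNReal.ofReal (f ω) ∂(μ.map (T^[t])) := by
      rw [lintegral_map' (hmp.map_eq.symm ▸ hfae) hmp.measurable.aemeasurable]
    rw [this, hmp.map_eq, ← ofReal_integral_eq_lintegral_ofReal hf (ae_of_all _ hf0)]
  simp_rw [hone]
  rw [Finset.sum_const, Finset.card_range, nsmul_eq_mul]
  rw [ENNReal.ofReal_inv_of_pos hn0, ENNReal.ofReal_natCast, ← mul_assoc,
    ENNReal.inv_mul_cancel (Nat.cast_ne_zero.mpr (by omega) : (n:ENNReal) ≠ 0)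
      (ENNReal.natCast_ne_top n), one_mul]

lemma main_int {Ωs : Type*} [MeasurableSpace Ωs] (μ : Measure Ωs) [IsProbabilityMeasure μ]
    {T : Ωs → Ωs} (hT : MeasurePreserving T μ μ) {f1 f2 : Ωs → ℝ}
    (hf1 : Integrable f1 μ) (hf10 : ∀ ω, 0 ≤ f1 ω)
    (hf2 : Integrable f2 μ) (hf20 : ∀ ω, 0 ≤ f2 ω)
    {n : ℕ} (hn : 1 ≤ n) (c m : ℝ) (hc : 0 ≤ c) (hm : 0 ≤ m) :
    ∫⁻ ω, ENNReal.ofReal (m * (c * ((n:ℝ)⁻¹ * ∑ t ∈ Finset.range n, f1 (T^[t] ω)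
        + (n:ℝ)⁻¹ * ∑ t ∈ Finset.range n, f2 (T^[t] ω) + 1))) ∂μ
      ≤ ENNReal.ofReal ((c * ((∫ ω, f1 ω ∂μ) + (∫ ω, f2 ω ∂μ) + 1)) * m) := by
  have hf1ae : AEMeasurable (fun ω => ENNReal.ofReal (f1 ω)) μ :=
    ENNReal.measurable_ofReal.comp_aemeasurable hf1.aestronglyMeasurable.aemeasurable
  have hf2ae : AEMeasurable (fun ω => ENNReal.ofReal (f2 ω)) μ :=
    ENNReal.measurable_ofReal.comp_aemeasurable hf2.aestronglyMeasurable.aemeasurable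
  have hA : ∀ ω, 0 ≤ (n:ℝ)⁻¹ * ∑ t ∈ Finset.range n, f1 (T^[t] ω) := by
    intro ω; exact mul_nonneg (by positivity) (Finset.sum_nonneg fun t _ => hf10 _)
  have hB : ∀ ω, 0 ≤ (n:ℝ)⁻¹ * ∑ t ∈ Finset.range n, f2 (T^[t] ω) := by
    intro ω; exact mul_nonneg (by positivity) (Finset.sum_nonneg fun t _ => hf20 _)
  have hpt : ∀ ω, ENNReal.ofReal (m * (c * ((n:ℝ)⁻¹ * ∑ t ∈ Finset.range n, f1 (T^[t] ω)
        + (n:ℝ)⁻¹ * ∑ t ∈ Finset.range n, f2 (T^[t] ω) + 1)))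
      = ENNReal.ofReal (m * c) *
        (ENNReal.ofReal ((n:ℝ)⁻¹ * ∑ t ∈ Finset.range n, f1 (T^[t] ω))
          + ENNReal.ofReal ((n:ℝ)⁻¹ * ∑ t ∈ Finset.range n, f2 (T^[t] ω)) + 1) := by
    intro ω
    rw [show m * (c * ((n:ℝ)⁻¹ * ∑ t ∈ Finset.range n, f1 (T^[t] ω)
        + (n:ℝ)⁻¹ * ∑ t ∈ Finset.range n, f2 (T^[t] ω) + 1))
      = (m * c) * ((n:ℝ)⁻¹ * ∑ t ∈ Finset.range n, f1 (T^[t] ω)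
        + (n:ℝ)⁻¹ * ∑ t ∈ Finset.range n, f2 (T^[t] ω) + 1) from by ring]
    rw [ENNReal.ofReal_mul (mul_nonneg hm hc),
      ENNReal.ofReal_add (by exact add_nonneg (hA ω) (hB ω)) zero_le_one,
      ENNReal.ofReal_add (hA ω) (hB ω), ENNReal.ofReal_one]
  simp_rw [hpt]
  rw [lintegral_const_mul' _ _ ENNReal.ofReal_ne_top]
  have hAae : AEMeasurable (fun ω => ENNReal.ofReal
      ((n:ℝ)⁻¹ * ∑ t ∈ Finset.range n, f1 (T^[t] ω))) μ := by
    apply ENNReal.measurable_ofReal.comp_aemeasurable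
    apply AEMeasurable.const_mul
    exact Finset.aemeasurable_fun_sum _ fun t _ =>
      hf1.aestronglyMeasurable.aemeasurable.comp_quasiMeasurePreserving
        (hT.iterate t).quasiMeasurePreserving
  have hBae : AEMeasurable (fun ω => ENNReal.ofReal
      ((n:ℝ)⁻¹ * ∑ t ∈ Finset.range n, f2 (T^[t] ω))) μ := by
    apply ENNReal.measurable_ofReal.comp_aemeasurable
    apply AEMeasurable.const_mul
    exact Finset.aemeasurable_fun_sum _ fun t _ =>
      hf2.aestronglyMeasurable.aemeasurable.comp_quasiMeasurePreserving
        (hT.iterate t).quasiMeasurePreserving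
  rw [lintegral_add_left' (hAae.fun_add hBae), lintegral_add_left' hAae, lintegral_const]
  rw [lint_avg μ hT hf1 hf10 hn, lint_avg μ hT hf2 hf20 hn]
  simp only [measure_univ, mul_one, one_mul]
  have hE1 : 0 ≤ ∫ ω, f1 ω ∂μ := integral_nonneg hf10
  have hE2 : 0 ≤ ∫ ω, f2 ω ∂μ := integral_nonneg hf20
  rw [← ENNReal.ofReal_one, ← ENNReal.ofReal_add hE1 hE2,
    ← ENNReal.ofReal_add (add_nonneg hE1 hE2) zero_le_one,
    ← ENNReal.ofReal_mul (mul_nonneg hm hc)]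
  exact ENNReal.ofReal_le_ofReal (le_of_eq (by ring))

/-- Lemma A2(i): there is a constant `C > 0` such that for all `n ≥ 1` and `s ∈ ℝ^q`,
`E[sup_{θ',θ'' ∈ Θ} |entry_{ij}(Ġ_n(s,θ')^⋆ Ġ_n(s,θ''))|] ≤ C min(1, ‖s‖²)` for every `i, j`;
in particular, for any `Θ`-valued random elements `θ̂'_n, θ̂''_n`, the real and imaginary parts
of every entry of `Ġ_n(s, θ̂'_n)^⋆ Ġ_n(s, θ̂''_n)` have absolute expectation at most
`C min(1, ‖s‖²)`. -/
theorem statement7 {Ωs : Type*} [MeasurableSpace Ωs] (μ : Measure Ωs) [IsProbabilityMeasure μ]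
    (d k l q : ℕ)
    (T : Ωs → Ωs) (hT : MeasurePreserving T μ μ)
    (Z0 : Ωs → EuclideanSpace ℝ (Fin k)) (X0 : Ωs → EuclideanSpace ℝ (Fin q))
    (hZ0 : Measurable Z0) (hX0 : Measurable X0)
    (Θ : Set (EuclideanSpace ℝ (Fin d))) (hΘ : IsCompact Θ)
    (h : EuclideanSpace ℝ (Fin k) → EuclideanSpace ℝ (Fin d) → EuclideanSpace ℝ (Fin l))
    (Dh : EuclideanSpace ℝ (Fin k) → EuclideanSpace ℝ (Fin d) →
      (EuclideanSpace ℝ (Fin d) →L[ℝ] EuclideanSpace ℝ (Fin l)))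
    (hsmooth : ∀ z, ContDiff ℝ 2 (h z))
    (hDh : ∀ z θ, HasFDerivAt (h z) (Dh z θ) θ)
    (g : EuclideanSpace ℝ (Fin k) → ℝ)
    (hg : ∀ z, ∀ θ ∈ Θ, ‖Dh z θ‖ ≤ g z)
    (hg2 : ∀ z, ∀ θ ∈ Θ, ‖iteratedFDeriv ℝ 2 (h z) θ‖ ≤ g z)
    (hm1 : Integrable (fun ω => g (Z0 ω) ^ 4) μ)
    (hm2 : Integrable (fun ω => ‖X0 ω‖ ^ 4) μ) :
    ∃ C > 0, ∀ n, 1 ≤ n → ∀ s : EuclideanSpace ℝ (Fin q), ∀ i : Fin d, ∀ j : Fin d,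
      ((∫⁻ ω, ENNReal.ofReal (⨆ θ' : Θ, ⨆ θ'' : Θ, ‖
          (((sampleGdot T Z0 X0 Dh n s θ'.1 ω)ᴴ * sampleGdot T Z0 X0 Dh n s θ''.1 ω) i j)‖) ∂μ)
        ≤ ENNReal.ofReal (C * min 1 (‖s‖ ^ 2))) ∧
      ∀ θ' θ'' : Ωs → EuclideanSpace ℝ (Fin d),
        (∀ ω, θ' ω ∈ Θ) → (∀ ω, θ'' ω ∈ Θ) →
        ((∫⁻ ω, ENNReal.ofReal
            |(((sampleGdot T Z0 X0 Dh n s (θ' ω) ω)ᴴ *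
                sampleGdot T Z0 X0 Dh n s (θ'' ω) ω) i j).re| ∂μ)
          ≤ ENNReal.ofReal (C * min 1 (‖s‖ ^ 2))) ∧
        ((∫⁻ ω, ENNReal.ofReal
            |(((sampleGdot T Z0 X0 Dh n s (θ' ω) ω)ᴴ *
                sampleGdot T Z0 X0 Dh n s (θ'' ω) ω) i j).im| ∂μ)
          ≤ ENNReal.ofReal (C * min 1 (‖s‖ ^ 2))) := by
  classical
  set g' : EuclideanSpace ℝ (Fin k) → ℝ := fun z => max (g z) 0 with hg'def
  have hg' : ∀ z, ∀ θ ∈ Θ, ‖Dh z θ‖ ≤ g' z := fun z θ hθ => (hg z θ hθ).trans (le_max_left _ _)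
  have hg'0 : ∀ z, 0 ≤ g' z := fun z => le_max_right _ _
  have hg'4 : ∀ z, g' z ^ 4 ≤ g z ^ 4 := by
    intro z
    rcases le_total (g z) 0 with hz | hz
    · have e : g' z = 0 := max_eq_right hz
      rw [e]
      simpa using (by positivity : (0:ℝ) ≤ g z ^ 4)
    · have e : g' z = g z := max_eq_left hz
      rw [e]
  have hf10 : ∀ ω, 0 ≤ g (Z0 ω) ^ 4 := fun ω => by positivity
  have hf20 : ∀ ω, 0 ≤ ‖X0 ω‖ ^ 4 := fun ω => by positivity
  have hE1 : 0 ≤ ∫ ω, g (Z0 ω) ^ 4 ∂μ := integral_nonneg hf10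
  have hE2 : 0 ≤ ∫ ω, ‖X0 ω‖ ^ 4 ∂μ := integral_nonneg hf20
  have hc0 : (0:ℝ) < 32 * ((l:ℝ) + 1) := by positivity
  refine ⟨32 * ((l:ℝ) + 1) * ((∫ ω, g (Z0 ω) ^ 4 ∂μ) + (∫ ω, ‖X0 ω‖ ^ 4 ∂μ) + 1),
    by nlinarith, ?_⟩
  intro n hn s i j
  have hm0 : (0:ℝ) ≤ min 1 (‖s‖ ^ 2) := le_min zero_le_one (by positivity)
  -- key pointwise bound
  have hkey : ∀ ω : Ωs, ∀ θ' ∈ Θ, ∀ θ'' ∈ Θ,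
      ‖((sampleGdot T Z0 X0 Dh n s θ' ω)ᴴ * sampleGdot T Z0 X0 Dh n s θ'' ω) i j‖
        ≤ min 1 (‖s‖^2) * ((32*((l:ℝ)+1)) *
          ((n:ℝ)⁻¹ * ∑ t ∈ Finset.range n, g (Z0 (T^[t] ω))^4
            + (n:ℝ)⁻¹ * ∑ t ∈ Finset.range n, ‖X0 (T^[t] ω)‖^4 + 1)) := by
    intro ω θ' hθ' θ'' hθ''
    refine (prod_entry_bound T Z0 X0 Dh Θ g' hg' hg'0 hn s hθ' hθ'' ω i j).trans ?_
    refine mul_le_mul_of_nonneg_left (mul_le_mul_of_nonneg_left ?_ hc0.le) hm0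
    have hsum : (n:ℝ)⁻¹ * ∑ t ∈ Finset.range n, g' (Z0 (T^[t] ω))^4
        ≤ (n:ℝ)⁻¹ * ∑ t ∈ Finset.range n, g (Z0 (T^[t] ω))^4 :=
      mul_le_mul_of_nonneg_left (Finset.sum_le_sum fun t _ => hg'4 _) (by positivity)
    linarith
  have hmain := main_int μ hT hm1 hf10 hm2 hf20 hn (32*((l:ℝ)+1)) (min 1 (‖s‖^2)) hc0.le hm0
  constructor
  · refine le_trans (lintegral_mono fun ω => ENNReal.ofReal_le_ofReal ?_) hmain
    refine Real.iSup_le (fun θ' => Real.iSup_le (fun θ'' =>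
      hkey ω θ'.1 θ'.2 θ''.1 θ''.2) ?_) ?_ <;>
    · have hK : (0:ℝ) ≤ (n:ℝ)⁻¹ * ∑ t ∈ Finset.range n, g (Z0 (T^[t] ω))^4
          + (n:ℝ)⁻¹ * ∑ t ∈ Finset.range n, ‖X0 (T^[t] ω)‖^4 + 1 := by
        have h1 : (0:ℝ) ≤ (n:ℝ)⁻¹ * ∑ t ∈ Finset.range n, g (Z0 (T^[t] ω))^4 :=
          mul_nonneg (by positivity) (Finset.sum_nonneg fun t _ => by positivity)
        have h2 : (0:ℝ) ≤ (n:ℝ)⁻¹ * ∑ t ∈ Finset.range n, ‖X0 (T^[t] ω)‖^4 :=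
          mul_nonneg (by positivity) (Finset.sum_nonneg fun t _ => by positivity)
        linarith
      exact mul_nonneg hm0 (mul_nonneg hc0.le hK)
  · intro θ' θ'' hθ'm hθ''m
    constructor
    · refine le_trans (lintegral_mono fun ω => ENNReal.ofReal_le_ofReal ?_) hmain
      exact (Complex.abs_re_le_norm _).trans (hkey ω _ (hθ'm ω) _ (hθ''m ω))
    · refine le_trans (lintegral_mono fun ω => ENNReal.ofReal_le_ofReal ?_) hmain
      exact (Complex.abs_im_le_norm _).trans (hkey ω _ (hθ'm ω) _ (hθ''m ω))
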